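/- Let 0 < γ' < γ < 2, 0 < r' < r ≤ ∞, and let M : ℕ → ℝ be a sequence of positive reals with M_0 = 1, M increasing and logarithmically convex. If f ∈ A^∞(S_{γ,r}) satisfies |f(z)| ≤ c_1·h_M(c_2·|z|) for all z ∈ S_{γ,r}, for some constants c_1, c_2 > 0, then f restricted to S_{γ',r'} belongs to A_M(S_{γ',r'}) and f is flat on S_{γ',r'}: f^{(j)}(z) → 0 as z → 0 in S_{γ',r'} for every j ∈ ℕ. -/

import Mathlib

open Set Filter Topology Complex ENNReal

noncomputable section

/-- The sector `S_{γ,r}` of the complex plane: `0 < |z| < r`, `|arg z| < γπ/2`. -/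
def Sector (γ : ℝ) (r : ℝ≥0∞) : Set ℂ :=
  {z : ℂ | z ≠ 0 ∧ |Complex.arg z| < γ * Real.pi / 2 ∧ (‖z‖₊ : ℝ≥0∞) < r}

/-- `f ∈ A^∞(S_{γ,r})`: `f` is holomorphic on the sector and all its derivatives
are bounded there. -/
def AInfty (γ : ℝ) (r : ℝ≥0∞) (f : ℂ → ℂ) : Prop :=
  DifferentiableOn ℂ f (Sector γ r) ∧
  ∀ j : ℕ, ∃ B : ℝ, ∀ z ∈ Sector γ r, ‖iteratedDeriv j f z‖ ≤ B

/-- `f ∈ A_M(S_{γ,r})`: `f ∈ A^∞(S_{γ,r})` with Denjoy–Carleman bounds. -/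
def AClass (M : ℕ → ℝ) (γ : ℝ) (r : ℝ≥0∞) (f : ℂ → ℂ) : Prop :=
  AInfty γ r f ∧
  ∃ C > (0:ℝ), ∃ σ > (0:ℝ), ∀ (j : ℕ), ∀ z ∈ Sector γ r,
    ‖iteratedDeriv j f z‖ ≤ C * σ ^ j * (Nat.factorial j : ℝ) * M j

/-- `f` is flat on `S_{γ,r}`: every derivative tends to `0` at the vertex. -/
def FlatOn (γ : ℝ) (r : ℝ≥0∞) (f : ℂ → ℂ) : Prop :=
  ∀ j : ℕ, Tendsto (iteratedDeriv j f) (𝓝[Sector γ r] 0) (𝓝 0)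

/-- The function `h_M` associated with the sequence `M`. -/
def hFun (M : ℕ → ℝ) (t : ℝ) : ℝ := if t = 0 then 0 else ⨅ j : ℕ, t ^ j * M j

/-!
Every point `z` of the smaller sector is the centre of a closed disc of radius `δ‖z‖` inside the
larger sector, with `δ > 0` independent of `z`. On that disc `h_M(c₂‖w‖) ≤ (c₂(1+δ)‖z‖)^k M_k` for
every `k`, so Cauchy's estimate with `k = j` gives `‖f^{(j)}(z)‖ ≤ c₁ σ^j j! M_j` with
`σ = c₂(1+δ)/δ` (the powers of `‖z‖` cancel), and with `k = j + 1` gives `‖f^{(j)}(z)‖ = O(‖z‖)`,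
hence flatness.
-/

open Metric

namespace Complex

theorem abs_arg_mul_le (x y : ℂ) : |arg (x * y)| ≤ |arg x| + |arg y| := by
  rcases eq_or_ne x 0 with rfl | hx
  · simp
  rcases eq_or_ne y 0 with rfl | hy
  · simp
  by_cases hsum : arg x + arg y ∈ Ioc (-Real.pi) Real.pi
  · rw [arg_mul hx hy hsum]
    exact abs_add_le _ _
  · have hπ : Real.pi ≤ |arg x + arg y| := by
      rw [mem_Ioc, not_and_or, not_lt, not_le] at hsum
      rw [le_abs]
      rcases hsum with h | h
      · right; linarith
      · left; linarith
    exact (abs_arg_le_pi _).trans (hπ.trans (abs_add_le _ _))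

theorem eventually_closedBall_one_subset_abs_arg_lt {ε : ℝ} (hε : 0 < ε) :
    ∀ᶠ δ in 𝓝 (0 : ℝ), closedBall (1 : ℂ) δ ⊆ {v | v ≠ 0 ∧ |arg v| < ε} := by
  refine eventually_closedBall_subset ?_
  have harg : Tendsto (fun v => |arg v|) (𝓝 (1 : ℂ)) (𝓝 0) := by
    simpa [ContinuousAt, arg_one] using (continuousAt_arg one_mem_slitPlane).abs
  exact (eventually_ne_nhds one_ne_zero).and (harg.eventually_lt_const hε)

end Complex

theorem ENNReal.eventually_ofReal_one_add_mul_lt {a b : ℝ≥0∞} (h : a < b) :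
    ∀ᶠ δ in 𝓝 (0 : ℝ), ENNReal.ofReal (1 + δ) * a < b := by
  have hlim : Tendsto (fun δ : ℝ => ENNReal.ofReal (1 + δ)) (𝓝 0) (𝓝 1) := by
    simpa using
      ENNReal.tendsto_ofReal (tendsto_const_nhds (x := (1 : ℝ)).add (tendsto_id (x := 𝓝 0)))
  simpa using (one_mul a ▸ ENNReal.Tendsto.mul_const hlim (.inl one_ne_zero)).eventually_lt_const h

theorem exists_closedBall_subset_sector {γ γ' : ℝ} {r r' : ℝ≥0∞} (hγ : γ' < γ) (hr : r' < r) :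
    ∃ δ > 0, ∀ z ∈ Sector γ' r', closedBall z (δ * ‖z‖) ⊆ Sector γ r := by
  have hε : 0 < (γ - γ') * Real.pi / 2 := by
    have := Real.pi_pos
    have := sub_pos.2 hγ
    positivity
  obtain ⟨δ, ⟨hball, hnorm⟩, hδ⟩ :=
    ((((Complex.eventually_closedBall_one_subset_abs_arg_lt hε).and
      (ENNReal.eventually_ofReal_one_add_mul_lt hr)).filter_mono nhdsWithin_le_nhds).and
      (self_mem_nhdsWithin (s := Ioi 0))).exists
  have hδ : 0 < δ := hδ
  refine ⟨δ, hδ, ?_⟩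
  rintro z ⟨hz0, hzarg, hzr⟩ w hw
  have hzpos : 0 < ‖z‖ := norm_pos_iff.2 hz0
  have hwz : w = z * (w / z) := by field_simp
  obtain ⟨hv0, hvarg⟩ := hball (show w / z ∈ closedBall 1 δ by
    rwa [mem_closedBall, dist_eq_norm, div_sub_one hz0, norm_div, div_le_iff₀ hzpos,
      ← dist_eq_norm])
  refine ⟨hwz ▸ mul_ne_zero hz0 hv0, ?_, ?_⟩
  · calc |arg w| ≤ |arg z| + |arg (w / z)| := by
          conv_lhs => rw [hwz]
          exact Complex.abs_arg_mul_le _ _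
      _ < γ' * Real.pi / 2 + (γ - γ') * Real.pi / 2 := add_lt_add hzarg hvarg
      _ = γ * Real.pi / 2 := by ring
  · calc (‖w‖₊ : ℝ≥0∞) = ENNReal.ofReal ‖w‖ := (ofReal_norm w).symm
      _ ≤ ENNReal.ofReal ((1 + δ) * ‖z‖) :=
          ENNReal.ofReal_le_ofReal (by linarith [norm_le_of_mem_closedBall hw])
      _ = ENNReal.ofReal (1 + δ) * ‖z‖₊ := by
          rw [ENNReal.ofReal_mul (by linarith), ofReal_norm]; rfl
      _ < ENNReal.ofReal (1 + δ) * r' :=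
          ENNReal.mul_lt_mul_right (ENNReal.ofReal_pos.2 (by linarith)).ne' ofReal_ne_top hzr
      _ < r := hnorm

theorem hFun_le_pow_mul {M : ℕ → ℝ} (hM : ∀ j, 0 ≤ M j) {t : ℝ} (ht : 0 ≤ t) (k : ℕ) :
    hFun M t ≤ t ^ k * M k := by
  unfold hFun
  split_ifs with h0
  · exact mul_nonneg (pow_nonneg ht k) (hM k)
  · exact ciInf_le ⟨0, by rintro _ ⟨j, rfl⟩; exact mul_nonneg (pow_nonneg ht j) (hM j)⟩ k

theorem norm_iteratedDeriv_le_of_norm_le_hFun {f : ℂ → ℂ} {U : Set ℂ}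
    (hf : DifferentiableOn ℂ f U) {M : ℕ → ℝ} (hM : ∀ j, 0 ≤ M j) {c₁ c₂ : ℝ} (hc₁ : 0 ≤ c₁)
    (hc₂ : 0 ≤ c₂) (hbd : ∀ w ∈ U, ‖f w‖ ≤ c₁ * hFun M (c₂ * ‖w‖)) {δ : ℝ} (hδ : 0 < δ)
    {z : ℂ} (hz : z ≠ 0) (hball : closedBall z (δ * ‖z‖) ⊆ U) (j m : ℕ) :
    ‖iteratedDeriv j f z‖ ≤
      c₁ * (c₂ * (1 + δ) / δ) ^ j * j.factorial * M (j + m) * (c₂ * (1 + δ) * ‖z‖) ^ m := by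
  have hR : 0 < δ * ‖z‖ := mul_pos hδ (norm_pos_iff.2 hz)
  have hbound : ∀ w ∈ sphere z (δ * ‖z‖),
      ‖f w‖ ≤ c₁ * ((c₂ * (1 + δ) * ‖z‖) ^ (j + m) * M (j + m)) := by
    intro w hw
    have hw' : c₂ * ‖w‖ ≤ c₂ * (1 + δ) * ‖z‖ := by
      rw [mul_assoc]
      exact mul_le_mul_of_nonneg_left
        (by linarith [norm_le_of_mem_closedBall (sphere_subset_closedBall hw)]) hc₂
    calc ‖f w‖ ≤ c₁ * hFun M (c₂ * ‖w‖) := hbd w (hball (sphere_subset_closedBall hw))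
      _ ≤ c₁ * ((c₂ * ‖w‖) ^ (j + m) * M (j + m)) := by
          gcongr; exact hFun_le_pow_mul hM (by positivity) _
      _ ≤ c₁ * ((c₂ * (1 + δ) * ‖z‖) ^ (j + m) * M (j + m)) := by
          gcongr
          exact hM _
  refine (Complex.norm_iteratedDeriv_le_of_forall_mem_sphere_norm_le j hR
    (hf.diffContOnCl_ball hball) hbound).trans_eq ?_
  have hpow : (c₂ * (1 + δ) / δ) ^ j * (δ * ‖z‖) ^ j = (c₂ * (1 + δ) * ‖z‖) ^ j := by
    rw [← mul_pow]
    congr 1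
    field_simp
  rw [div_eq_iff (pow_pos hR j).ne', pow_add, ← hpow]
  ring

theorem AClass_of_flat_bound_general
    (γ γ' : ℝ) (hγ' : γ' < γ)
    (r r' : ℝ≥0∞) (hr' : r' < r)
    (M : ℕ → ℝ) (hpos : ∀ j, 0 < M j)
    (f : ℂ → ℂ) (hf : AInfty γ r f)
    (c₁ c₂ : ℝ) (hc₁ : 0 < c₁) (hc₂ : 0 < c₂)
    (hbd : ∀ z ∈ Sector γ r, ‖f z‖ ≤ c₁ * hFun M (c₂ * ‖z‖)) :
    AClass M γ' r' f ∧ FlatOn γ' r' f := by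
  obtain ⟨δ, hδ, hball⟩ := exists_closedBall_subset_sector hγ' hr'
  have hcauchy (j m : ℕ) (z : ℂ) (hz : z ∈ Sector γ' r') :=
    norm_iteratedDeriv_le_of_norm_le_hFun hf.1 (fun j => (hpos j).le) hc₁.le hc₂.le hbd hδ hz.1
      (hball z hz) j m
  have hsub : Sector γ' r' ⊆ Sector γ r := fun z hz =>
    hball z hz (mem_closedBall_self (mul_pos hδ (norm_pos_iff.2 hz.1)).le)
  set σ := c₂ * (1 + δ) / δ
  have hAM (j : ℕ) (z : ℂ) (hz : z ∈ Sector γ' r') :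
      ‖iteratedDeriv j f z‖ ≤ c₁ * σ ^ j * j.factorial * M j := by
    simpa using hcauchy j 0 z hz
  refine ⟨⟨⟨hf.1.mono hsub, fun j => ⟨_, hAM j⟩⟩, c₁, hc₁, σ, by positivity, hAM⟩, fun j => ?_⟩
  have hlin : Tendsto (fun z : ℂ => c₁ * σ ^ j * j.factorial * M (j + 1) * (c₂ * (1 + δ) * ‖z‖))
      (𝓝[Sector γ' r'] 0) (𝓝 0) := by
    refine tendsto_nhdsWithin_of_tendsto_nhds ?_
    simpa using ((continuous_const.mul continuous_norm).tendsto (0 : ℂ)).const_mul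
      (c₁ * σ ^ j * j.factorial * M (j + 1))
  exact squeeze_zero_norm' (eventually_nhdsWithin_of_forall fun z hz => by
    simpa using hcauchy j 1 z hz) hlin

/-- Conversely, a function of `A^∞(S_{γ,r})` satisfying `|f(z)| ≤ c₁·h_M(c₂·|z|)`
belongs to `A_M(S_{γ',r'})` for `γ' < γ`, `r' < r`, and is flat there. -/
theorem AClass_of_flat_bound
    (γ γ' : ℝ) (hγ'0 : 0 < γ') (hγ' : γ' < γ) (hγ2 : γ < 2)
    (r r' : ℝ≥0∞) (hr'0 : 0 < r') (hr' : r' < r)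
    (M : ℕ → ℝ) (hpos : ∀ j, 0 < M j) (hM0 : M 0 = 1) (hmono : Monotone M)
    (hlc : ∀ j : ℕ, (M (j+1))^2 ≤ M j * M (j+2))
    (f : ℂ → ℂ) (hf : AInfty γ r f)
    (c₁ c₂ : ℝ) (hc₁ : 0 < c₁) (hc₂ : 0 < c₂)
    (hbd : ∀ z ∈ Sector γ r, ‖f z‖ ≤ c₁ * hFun M (c₂ * ‖z‖)) :
    AClass M γ' r' f ∧ FlatOn γ' r' f :=
  AClass_of_flat_bound_general γ γ' hγ' r r' hr' M hpos f hf c₁ c₂ hc₁ hc₂ hbd
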